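/- Let (G,w) be a connected weighted graph whose weight w is Φ-pseudosemimetrizable, with Φ a continuous triangle function satisfying the standing conditions. Then d_Φ^w is the greatest element of the set 𝔐_Φ^w of all Φ-pseudosemimetrics d on V(G) extending w (i.e., d(u,v) = w({u,v}) for all edges), with respect to pointwise order. Conversely, if 𝔐_Φ^w has a greatest element, then G is connected. -/

import Mathlib

open scoped NNReal
open SimpleGraph

/-- Iterated triangle function: `PhiStar Φ x [y₁,...,yₖ] = Φ*(x, y₁, ..., yₖ)`. -/
def PhiStar (Φ : ℝ≥0 → ℝ≥0 → ℝ≥0) : ℝ≥0 → List ℝ≥0 → ℝ≥0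
  | x, [] => x
  | x, y :: l => Φ x (PhiStar Φ y l)

/-- `Φ`-weight of a (possibly empty) list of weights. -/
def listPhi (Φ : ℝ≥0 → ℝ≥0 → ℝ≥0) : List ℝ≥0 → ℝ≥0
  | [] => 0
  | x :: l => PhiStar Φ x l

/-- `d` is a `Φ`-pseudosemimetric: symmetric, vanishing on the diagonal, and satisfying
the generalized triangle inequality with triangle function `Φ`. -/
def IsPseudoSemimetricWith {X : Type*} (Φ : ℝ≥0 → ℝ≥0 → ℝ≥0) (d : X → X → ℝ≥0) : Prop :=
  (∀ x y, d x y = d y x) ∧ (∀ x, d x x = 0) ∧ ∀ x y z, d x y ≤ Φ (d x z) (d y z)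

/-- Standing conditions on a continuous triangle function `Φ`. -/
def Standing (Φ : ℝ≥0 → ℝ≥0 → ℝ≥0) : Prop :=
  Continuous (fun q : ℝ≥0 × ℝ≥0 => Φ q.1 q.2) ∧
  (∀ x y, Φ x y = Φ y x) ∧
  (∀ a, Monotone (Φ a)) ∧ (∀ b, Monotone fun a => Φ a b) ∧
  Φ 0 0 = 0 ∧
  (∀ x y z, Φ x (Φ y z) = Φ z (Φ x y)) ∧
  (∀ (a b c : ℝ≥0) (as bs cs : List ℝ≥0),
      (a ::ₘ (as : Multiset ℝ≥0)) ≤ (b ::ₘ (bs : Multiset ℝ≥0)) + (c ::ₘ (cs : Multiset ℝ≥0)) →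
      PhiStar Φ a as ≤ Φ (PhiStar Φ b bs) (PhiStar Φ c cs)) ∧
  (∀ a b, max a b ≤ Φ a b)

/-- The shortest-`Φ`-path function `d_Φ^w`. -/
noncomputable def dPhi {V : Type*} (G : SimpleGraph V) (Φ : ℝ≥0 → ℝ≥0 → ℝ≥0)
    (w : Sym2 V → ℝ≥0) (u v : V) : ℝ≥0 :=
  sInf {x | ∃ p : G.Walk u v, p.IsPath ∧ listPhi Φ (p.edges.map w) = x}

/-!
A `Φ`-pseudosemimetric `d` extending `w` is bounded, on every pair of vertices, by the `Φ`-weight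
of any path joining them: iterate the triangle inequality along the path. Hence `d ≤ d_Φ^w`, and
since `w` is `Φ`-pseudosemimetrizable, `d_Φ^w` agrees with `w` on edges. For the triangle
inequality of `d_Φ^w`, concatenate paths `x → z` and `z → y` and shortcut the resulting walk to a
path; its multiset of edges is contained in the sum of the two, which is exactly the situation of
the multiset condition on `Φ`. Continuity of `Φ` then passes the inequality to the infima.

Conversely, if `x` and `y` lie in different components, raising a pseudosemimetric to at least `K`
between components keeps it a `Φ`-pseudosemimetric extending `w` (because `Φ` dominates `max`), so
no function bounds all of `𝔐_Φ^w` at `(x, y)`.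
-/

lemma le_apply_csInf_csInf {α β : Type*} [ConditionallyCompleteLinearOrder α]
    [TopologicalSpace α] [OrderTopology α] [TopologicalSpace β] [Preorder β]
    [OrderClosedTopology β] {f : α → α → β} (hf : Continuous fun q : α × α => f q.1 q.2)
    {s t : Set α} (hs : s.Nonempty) (hs' : BddBelow s) (ht : t.Nonempty) (ht' : BddBelow t)
    {c : β} (h : ∀ a ∈ s, ∀ b ∈ t, c ≤ f a b) : c ≤ f (sInf s) (sInf t) := by
  have hclosed : IsClosed {q : α × α | c ≤ f q.1 q.2} := isClosed_le continuous_const hf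
  have hmem : (sInf s, sInf t) ∈ closure (s ×ˢ t) := by
    rw [closure_prod_eq]
    exact ⟨csInf_mem_closure hs hs', csInf_mem_closure ht ht'⟩
  exact closure_minimal (fun q hq => h _ hq.1 _ hq.2) hclosed hmem

lemma SimpleGraph.Walk.coe_edges_bypass_le {V : Type*} {G : SimpleGraph V} [DecidableEq V]
    {u v : V} (p : G.Walk u v) : (p.bypass.edges : Multiset (Sym2 V)) ≤ p.edges :=
  Multiset.coe_le.mpr <|
    List.subperm_of_subset p.bypass_isPath.edges_nodup p.edges_bypass_subset_edges

section PhiStar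

variable {Φ : ℝ≥0 → ℝ≥0 → ℝ≥0}

lemma phiStar_eq_of_ne_nil (a : ℝ≥0) {l : List ℝ≥0} (hl : l ≠ []) :
    PhiStar Φ a l = Φ a (listPhi Φ l) := by
  cases l with
  | nil => exact absurd rfl hl
  | cons b t => rfl

lemma listPhi_perm (hcomm : ∀ x y, Φ x y = Φ y x)
    (hrot : ∀ x y z, Φ x (Φ y z) = Φ z (Φ x y)) {l₁ l₂ : List ℝ≥0} (h : l₁.Perm l₂) :
    listPhi Φ l₁ = listPhi Φ l₂ := by
  have hleft_comm : ∀ a b c, Φ a (Φ b c) = Φ b (Φ a c) := fun a b c => by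
    rw [hrot a b c, hrot b a c, hcomm a b]
  induction h with
  | nil => rfl
  | @cons x t₁ t₂ h ih =>
    rcases eq_or_ne t₁ [] with rfl | h₁
    · rw [h.symm.eq_nil]
    · have h₂ : t₂ ≠ [] := fun e => h₁ (by subst e; exact h.eq_nil)
      change PhiStar Φ x t₁ = PhiStar Φ x t₂
      rw [phiStar_eq_of_ne_nil x h₁, phiStar_eq_of_ne_nil x h₂, ih]
  | swap x y l =>
    change PhiStar Φ y (x :: l) = PhiStar Φ x (y :: l)
    rcases eq_or_ne l [] with rfl | hl
    · exact hcomm y x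
    · change Φ y (PhiStar Φ x l) = Φ x (PhiStar Φ y l)
      rw [phiStar_eq_of_ne_nil x hl, phiStar_eq_of_ne_nil y hl, hleft_comm]
  | trans _ _ ih₁ ih₂ => exact ih₁.trans ih₂

lemma listPhi_le_of_coe_le_add
    (hsub : ∀ (a b c : ℝ≥0) (as bs cs : List ℝ≥0),
      (a ::ₘ (as : Multiset ℝ≥0)) ≤ (b ::ₘ (bs : Multiset ℝ≥0)) + (c ::ₘ (cs : Multiset ℝ≥0)) →
      PhiStar Φ a as ≤ Φ (PhiStar Φ b bs) (PhiStar Φ c cs))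
    {l₀ l₁ l₂ : List ℝ≥0} (h₁ : l₁ ≠ []) (h₂ : l₂ ≠ [])
    (h : (l₀ : Multiset ℝ≥0) ≤ l₁ + l₂) : listPhi Φ l₀ ≤ Φ (listPhi Φ l₁) (listPhi Φ l₂) := by
  match l₀, l₁, l₂, h₁, h₂ with
  | [], _, _, _, _ => exact zero_le
  | a :: as, b :: bs, c :: cs, _, _ => exact hsub a b c as bs cs h

lemma IsPseudoSemimetricWith.le_listPhi_edges {V : Type*} {G : SimpleGraph V}
    {w : Sym2 V → ℝ≥0} {d : V → V → ℝ≥0} (hmono : ∀ a, Monotone (Φ a))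
    (hd : IsPseudoSemimetricWith Φ d) (hw : ∀ u v, G.Adj u v → d u v = w s(u, v))
    {x y : V} (p : G.Walk x y) : d x y ≤ listPhi Φ (p.edges.map w) := by
  induction p with
  | nil => exact (hd.2.1 _).le
  | @cons a b c h q ih =>
    cases q with
    | nil => exact (hw a b h).le
    | cons h' q' =>
      calc d a c ≤ Φ (d a b) (d c b) := hd.2.2 a c b
        _ = Φ (w s(a, b)) (d b c) := by rw [hw a b h, hd.1 c b]
        _ ≤ _ := hmono _ ih

end PhiStar

section dPhi

variable {V : Type*} {G : SimpleGraph V} {Φ : ℝ≥0 → ℝ≥0 → ℝ≥0} {w : Sym2 V → ℝ≥0}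

lemma dPhi_le_of_isPath {x y : V} {p : G.Walk x y} (hp : p.IsPath) :
    dPhi G Φ w x y ≤ listPhi Φ (p.edges.map w) :=
  csInf_le (OrderBot.bddBelow _) ⟨p, hp, rfl⟩

lemma dPhi_self (x : V) : dPhi G Φ w x x = 0 :=
  nonpos_iff_eq_zero.mp (dPhi_le_of_isPath Walk.IsPath.nil)

lemma dPhi_comm (hcomm : ∀ x y, Φ x y = Φ y x) (hrot : ∀ x y z, Φ x (Φ y z) = Φ z (Φ x y))
    (x y : V) : dPhi G Φ w x y = dPhi G Φ w y x := by
  suffices h : ∀ x y, {r | ∃ p : G.Walk x y, p.IsPath ∧ listPhi Φ (p.edges.map w) = r} ⊆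
      {r | ∃ p : G.Walk y x, p.IsPath ∧ listPhi Φ (p.edges.map w) = r} from
    congrArg sInf ((h x y).antisymm (h y x))
  rintro x y r ⟨p, hp, rfl⟩
  refine ⟨p.reverse, hp.reverse, ?_⟩
  rw [Walk.edges_reverse, List.map_reverse]
  exact listPhi_perm hcomm hrot (List.reverse_perm _)

lemma le_dPhi (hmono : ∀ a, Monotone (Φ a)) {d : V → V → ℝ≥0}
    (hd : IsPseudoSemimetricWith Φ d) (hw : ∀ u v, G.Adj u v → d u v = w s(u, v))
    {x y : V} (hxy : G.Reachable x y) : d x y ≤ dPhi G Φ w x y := by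
  classical
  obtain ⟨p⟩ := hxy
  refine le_csInf ⟨_, p.bypass, p.bypass_isPath, rfl⟩ ?_
  rintro r ⟨q, -, rfl⟩
  exact hd.le_listPhi_edges hmono hw q

lemma dPhi_eq_of_adj (hmono : ∀ a, Monotone (Φ a)) {d : V → V → ℝ≥0}
    (hd : IsPseudoSemimetricWith Φ d) (hw : ∀ u v, G.Adj u v → d u v = w s(u, v))
    {u v : V} (h : G.Adj u v) : dPhi G Φ w u v = w s(u, v) := by
  refine le_antisymm ?_ ?_
  · exact dPhi_le_of_isPath (p := Walk.cons h Walk.nil) (by simp [h.ne])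
  · exact hw u v h ▸ le_dPhi hmono hd hw h.reachable

lemma dPhi_le_of_isPath_of_isPath (hΦ : Standing Φ) {x y z : V} {p₁ : G.Walk x z}
    {p₂ : G.Walk y z} (hp₁ : p₁.IsPath) (hp₂ : p₂.IsPath) :
    dPhi G Φ w x y ≤ Φ (listPhi Φ (p₁.edges.map w)) (listPhi Φ (p₂.edges.map w)) := by
  classical
  obtain ⟨-, hcomm, -, -, -, hrot, hsub, hmax⟩ := hΦ
  cases p₁ with
  | nil =>
    rw [dPhi_comm hcomm hrot]
    exact (dPhi_le_of_isPath hp₂).trans ((le_max_right _ _).trans (hmax _ _))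
  | cons h₁ q₁ =>
    cases p₂ with
    | nil => exact (dPhi_le_of_isPath hp₁).trans ((le_max_left _ _).trans (hmax _ _))
    | cons h₂ q₂ =>
      set q := (Walk.cons h₁ q₁).append (Walk.cons h₂ q₂).reverse
      have hle : ((q.bypass.edges.map w : List ℝ≥0) : Multiset ℝ≥0) ≤
          ↑((Walk.cons h₁ q₁).edges.map w) + ↑((Walk.cons h₂ q₂).edges.map w) := by
        have := Multiset.map_le_map (f := w) q.coe_edges_bypass_le
        rwa [Multiset.map_coe, Multiset.map_coe, Walk.edges_append, Walk.edges_reverse,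
          List.map_append, List.map_reverse, ← Multiset.coe_add, Multiset.coe_reverse] at this
      exact (dPhi_le_of_isPath q.bypass_isPath).trans
        (listPhi_le_of_coe_le_add hsub (by simp) (by simp) hle)

lemma dPhi_triangle (hΦ : Standing Φ) (hG : G.Preconnected) (x y z : V) :
    dPhi G Φ w x y ≤ Φ (dPhi G Φ w x z) (dPhi G Φ w y z) := by
  classical
  have hne : ∀ u v, {r | ∃ p : G.Walk u v, p.IsPath ∧ listPhi Φ (p.edges.map w) = r}.Nonempty :=
    fun u v => let ⟨p⟩ := hG u v; ⟨_, p.bypass, p.bypass_isPath, rfl⟩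
  refine le_apply_csInf_csInf hΦ.1 (hne x z) (OrderBot.bddBelow _) (hne y z)
    (OrderBot.bddBelow _) ?_
  rintro _ ⟨p₁, hp₁, rfl⟩ _ ⟨p₂, hp₂, rfl⟩
  exact dPhi_le_of_isPath_of_isPath hΦ hp₁ hp₂

end dPhi

section separateComponents

variable {V : Type*} {G : SimpleGraph V} {Φ : ℝ≥0 → ℝ≥0 → ℝ≥0} {d : V → V → ℝ≥0} {K : ℝ≥0}

open Classical in
noncomputable def separateComponents (G : SimpleGraph V) (d : V → V → ℝ≥0) (K : ℝ≥0)
    (x y : V) : ℝ≥0 :=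
  if G.Reachable x y then d x y else max (d x y) K

lemma separateComponents_of_reachable {x y : V} (h : G.Reachable x y) :
    separateComponents G d K x y = d x y := if_pos h

lemma separateComponents_of_not_reachable {x y : V} (h : ¬G.Reachable x y) :
    separateComponents G d K x y = max (d x y) K := if_neg h

lemma le_separateComponents (x y : V) : d x y ≤ separateComponents G d K x y := by
  by_cases h : G.Reachable x y
  · rw [separateComponents_of_reachable h]
  · rw [separateComponents_of_not_reachable h]
    exact le_max_left _ _

lemma le_separateComponents_of_not_reachable {x y : V} (h : ¬G.Reachable x y) :
    K ≤ separateComponents G d K x y :=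
  (separateComponents_of_not_reachable h).symm ▸ le_max_right _ _

lemma isPseudoSemimetricWith_separateComponents (hmono : ∀ a, Monotone (Φ a))
    (hmono' : ∀ b, Monotone fun a => Φ a b) (hmax : ∀ a b, max a b ≤ Φ a b)
    (hd : IsPseudoSemimetricWith Φ d) :
    IsPseudoSemimetricWith Φ (separateComponents G d K) := by
  refine ⟨fun x y => ?_, fun x => ?_, fun x y z => ?_⟩
  · by_cases h : G.Reachable x y
    · rw [separateComponents_of_reachable h, separateComponents_of_reachable h.symm, hd.1]
    · rw [separateComponents_of_not_reachable h,
        separateComponents_of_not_reachable (mt Reachable.symm h), hd.1]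
  · rw [separateComponents_of_reachable (Reachable.refl x), hd.2.1]
  · have hd_le : d x y ≤ Φ (separateComponents G d K x z) (separateComponents G d K y z) :=
      (hd.2.2 x y z).trans ((hmono' _ (le_separateComponents x z)).trans
        (hmono _ (le_separateComponents y z)))
    by_cases h : G.Reachable x y
    · rwa [separateComponents_of_reachable h]
    rw [separateComponents_of_not_reachable h]
    refine max_le hd_le ?_
    by_cases hxz : G.Reachable x z
    · have hyz : ¬G.Reachable y z := fun hyz => h (hxz.trans hyz.symm)
      exact (le_separateComponents_of_not_reachable hyz).trans
        ((le_max_right _ _).trans (hmax _ _))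
    · exact (le_separateComponents_of_not_reachable hxz).trans
        ((le_max_left _ _).trans (hmax _ _))

lemma separateComponents_of_adj {w : Sym2 V → ℝ≥0} (hw : ∀ u v, G.Adj u v → d u v = w s(u, v))
    {u v : V} (h : G.Adj u v) : separateComponents G d K u v = w s(u, v) :=
  (separateComponents_of_reachable h.reachable).trans (hw u v h)

end separateComponents

lemma SimpleGraph.preconnected_of_forall_le {V : Type*} {G : SimpleGraph V}
    {Φ : ℝ≥0 → ℝ≥0 → ℝ≥0} {w : Sym2 V → ℝ≥0} (hmono : ∀ a, Monotone (Φ a))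
    (hmono' : ∀ b, Monotone fun a => Φ a b) (hmax : ∀ a b, max a b ≤ Φ a b)
    {d₀ : V → V → ℝ≥0} (hd₀ : IsPseudoSemimetricWith Φ d₀)
    (hw₀ : ∀ u v, G.Adj u v → d₀ u v = w s(u, v)) {dm : V → V → ℝ≥0}
    (hdm : ∀ d : V → V → ℝ≥0, IsPseudoSemimetricWith Φ d →
      (∀ u v, G.Adj u v → d u v = w s(u, v)) → ∀ x y, d x y ≤ dm x y) :
    G.Preconnected := by
  intro u v
  by_contra huv
  have hle := hdm (separateComponents G d₀ (dm u v + 1))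
    (isPseudoSemimetricWith_separateComponents hmono hmono' hmax hd₀)
    (fun _ _ => separateComponents_of_adj hw₀) u v
  exact (lt_add_one (dm u v)).not_ge ((le_separateComponents_of_not_reachable huv).trans hle)

/-- if `G` is connected and `w` is `Φ`-pseudosemimetrizable, then `d_Φ^w`
is the greatest element of the set `𝔐_Φ^w` of `Φ`-pseudosemimetrics extending `w`;
conversely, if `𝔐_Φ^w` has a greatest element, then `G` is connected. -/
theorem stmt_10 {V : Type*} (G : SimpleGraph V) (w : Sym2 V → ℝ≥0)
    (Φ : ℝ≥0 → ℝ≥0 → ℝ≥0) (hΦ : Standing Φ)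
    (hmetr : ∃ d : V → V → ℝ≥0, IsPseudoSemimetricWith Φ d ∧
      ∀ u v, G.Adj u v → d u v = w s(u, v)) :
    (G.Preconnected →
      (IsPseudoSemimetricWith Φ (dPhi G Φ w) ∧
        (∀ u v, G.Adj u v → dPhi G Φ w u v = w s(u, v)) ∧
        ∀ d : V → V → ℝ≥0, IsPseudoSemimetricWith Φ d →
          (∀ u v, G.Adj u v → d u v = w s(u, v)) →
          ∀ x y, d x y ≤ dPhi G Φ w x y)) ∧
    ((∃ dm : V → V → ℝ≥0,
        (IsPseudoSemimetricWith Φ dm ∧ ∀ u v, G.Adj u v → dm u v = w s(u, v)) ∧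
        ∀ d : V → V → ℝ≥0, IsPseudoSemimetricWith Φ d →
          (∀ u v, G.Adj u v → d u v = w s(u, v)) →
          ∀ x y, d x y ≤ dm x y) → G.Preconnected) := by
  obtain ⟨d₀, hd₀, hw₀⟩ := hmetr
  obtain ⟨-, hcomm, hmono, hmono', -, hrot, -, hmax⟩ := id hΦ
  refine ⟨fun hG => ⟨⟨dPhi_comm hcomm hrot, dPhi_self, dPhi_triangle hΦ hG⟩,
    fun u v h => dPhi_eq_of_adj hmono hd₀ hw₀ h,
    fun d hd hw x y => le_dPhi hmono hd hw (hG x y)⟩, ?_⟩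
  rintro ⟨dm, -, hdm⟩
  exact preconnected_of_forall_le hmono hmono' hmax hd₀ hw₀ hdm
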